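/- Let $\mathcal{L}_k \subset \mathbb{R}^{2n}$ be a $k$-dimensional isotropic subspace and let $\check r \subset \mathbb{C}^{2n}$ be an $n$-dimensional complex subspace satisfying: (i) $\omega(Y_1,Y_2)=0$ for $Y_1,Y_2 \in \check r$; (ii) $\mathcal{L}_k^{\mathbb{C}} \subset \check r$ and $\omega(Y,Y^*)=0$ for $Y \in \mathcal{L}_k^{\mathbb{C}}$; (iii) $\frac{1}{i}\omega(Y,Y^*)>0$ for $Y \in \check r \setminus \mathcal{L}_k^{\mathbb{C}}$. Then $(\mathcal{L}_k^{\mathbb{C}})^{\perp\omega} = \check r + \check r^*$ and $\check r \cap \check r^* = \mathcal{L}_k^{\mathbb{C}}$. -/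

import Mathlib

open scoped BigOperators

/-- The complexified phase space `ℂ^{2n}`. -/
abbrev CPhase (n : ℕ) := (Fin n → ℂ) × (Fin n → ℂ)

/-- Complex bilinear extension of the standard symplectic form. -/
noncomputable def symplFormC (n : ℕ) (X Y : CPhase n) : ℂ :=
  ∑ j, (X.1 j * Y.2 j - Y.1 j * X.2 j)

/-- Componentwise complex conjugation `Y ↦ Y^*`. -/
def conjV (n : ℕ) (Y : CPhase n) : CPhase n :=
  (fun j => (starRingEnd ℂ) (Y.1 j), fun j => (starRingEnd ℂ) (Y.2 j))

def IsIsotropicC (n : ℕ) (r : Submodule ℂ (CPhase n)) : Prop :=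
  ∀ X ∈ r, ∀ Y ∈ r, symplFormC n X Y = 0

/-- Positivity: `(1/i) ω(Y, Y^*) > 0` (a positive real number) for nonzero `Y ∈ r`. -/
def IsPositiveGerm (n : ℕ) (r : Submodule ℂ (CPhase n)) : Prop :=
  ∀ Y ∈ r, Y ≠ 0 →
    0 < (-Complex.I * symplFormC n Y (conjV n Y)).re ∧
    (-Complex.I * symplFormC n Y (conjV n Y)).im = 0

/-- The standard symplectic form on the real phase space `ℝ^{2n}`. -/
noncomputable def symplForm (n : ℕ) (X Y : (Fin n → ℝ) × (Fin n → ℝ)) : ℝ :=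
  ∑ j, (X.1 j * Y.2 j - Y.1 j * X.2 j)

def IsIsotropic (n : ℕ) (V : Submodule ℝ ((Fin n → ℝ) × (Fin n → ℝ))) : Prop :=
  ∀ X ∈ V, ∀ Y ∈ V, symplForm n X Y = 0

/-- Inclusion of the real phase space into its complexification. -/
def incC (n : ℕ) (X : (Fin n → ℝ) × (Fin n → ℝ)) : CPhase n :=
  (fun j => (X.1 j : ℂ), fun j => (X.2 j : ℂ))

/-- The complexification `L^ℂ` of a real subspace `L ⊂ ℝ^{2n}` inside `ℂ^{2n}`. -/
noncomputable def complexify (n : ℕ) (L : Submodule ℝ ((Fin n → ℝ) × (Fin n → ℝ))) :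
    Submodule ℂ (CPhase n) :=
  Submodule.span ℂ (incC n '' (L : Set ((Fin n → ℝ) × (Fin n → ℝ))))

/-- The skew-orthogonal complement `V^{⊥ω}` in `ℂ^{2n}`, as a subspace. -/
noncomputable def skewPerpC (n : ℕ) (V : Submodule ℂ (CPhase n)) : Submodule ℂ (CPhase n) where
  carrier := {Y | ∀ X ∈ V, symplFormC n Y X = 0}
  add_mem' := by
    intro a b ha hb X hX
    have h1 := ha X hX
    have h2 := hb X hX
    have hsplit : ∀ j ∈ Finset.univ,
        ((a + b).1 j * X.2 j - X.1 j * (a + b).2 j) =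
          (a.1 j * X.2 j - X.1 j * a.2 j) + (b.1 j * X.2 j - X.1 j * b.2 j) := by
      intro j _
      simp only [Prod.fst_add, Prod.snd_add, Pi.add_apply]
      ring
    show symplFormC n (a + b) X = 0
    rw [symplFormC, Finset.sum_congr rfl hsplit, Finset.sum_add_distrib]
    rw [symplFormC] at h1 h2
    rw [h1, h2, add_zero]
  zero_mem' := by
    intro X hX
    simp [symplFormC]
  smul_mem' := by
    intro c a ha X hX
    have h1 := ha X hX
    have hsplit : ∀ j ∈ Finset.univ,
        ((c • a).1 j * X.2 j - X.1 j * (c • a).2 j) =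
          c * (a.1 j * X.2 j - X.1 j * a.2 j) := by
      intro j _
      simp only [Prod.smul_fst, Prod.smul_snd, Pi.smul_apply, smul_eq_mul]
      ring
    show symplFormC n (c • a) X = 0
    rw [symplFormC, Finset.sum_congr rfl hsplit, ← Finset.mul_sum]
    rw [symplFormC] at h1
    rw [h1, mul_zero]

/-!
Since `L^ℂ` is stable under conjugation and contained in the isotropic space `ř`, both `ř` and
`ř^*` are skew-orthogonal to `L^ℂ`. An element `Y = W^*` of `ř ∩ ř^*` (with `W ∈ ř`) has
`ω(Y, Y^*) = ω(W^*, W) = 0` by isotropy, so positivity forces `ř ∩ ř^* = L^ℂ`. Hence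
`dim (ř + ř^*) = 2n - dim L^ℂ = dim (L^ℂ)^{⊥ω}` by nondegeneracy of `ω`, and the inclusion
`ř + ř^* ⊆ (L^ℂ)^{⊥ω}` is an equality.
-/

open Module

section StarSubmodule

variable {𝕜 E : Type*} [Field 𝕜] [StarRing 𝕜] [AddCommGroup E] [Module 𝕜 E]
  [StarAddMonoid E] [StarModule 𝕜 E] {B : LinearMap.BilinForm 𝕜 E} {r V : Submodule 𝕜 E}

def starSubmodule (V : Submodule 𝕜 E) : Submodule 𝕜 E :=
  V.map (starLinearEquiv 𝕜 (A := E)).toLinearMap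

lemma mem_starSubmodule {Z : E} : Z ∈ starSubmodule V ↔ ∃ Y ∈ V, star Y = Z :=
  Submodule.mem_map

lemma star_mem_starSubmodule {Y : E} (hY : Y ∈ V) : star Y ∈ starSubmodule V :=
  mem_starSubmodule.2 ⟨Y, hY, rfl⟩

lemma finrank_starSubmodule (V : Submodule 𝕜 E) :
    finrank 𝕜 (starSubmodule V) = finrank 𝕜 V := by
  let e := Submodule.equivMapOfInjective _ (starLinearEquiv 𝕜 (A := E)).injective V
  exact congrArg Cardinal.toNat
    (rank_eq_of_equiv_equiv star e.toAddEquiv (Function.Involutive.bijective star_star)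
      fun c x => e.map_smulₛₗ c x).symm

lemma star_mem_span_of_forall_star_mem {S : Set E} (hS : ∀ x ∈ S, star x ∈ S) {Y : E}
    (hY : Y ∈ Submodule.span 𝕜 S) : star Y ∈ Submodule.span 𝕜 S := by
  have hle : starSubmodule (Submodule.span 𝕜 S) ≤ Submodule.span 𝕜 S := by
    rw [starSubmodule, Submodule.map_span]
    exact Submodule.span_mono (by rintro _ ⟨x, hx, rfl⟩; exact hS x hx)
  exact hle (star_mem_starSubmodule hY)

theorem inf_starSubmodule_le (hr : r ≤ B.orthogonal r)
    (hV : ∀ Y ∈ r, Y ∉ V → B (star Y) Y ≠ 0) : r ⊓ starSubmodule r ≤ V := by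
  rintro Y ⟨hYr, hY⟩
  obtain ⟨W, hWr, rfl⟩ := mem_starSubmodule.1 hY
  by_contra hYV
  exact hV _ hYr hYV (by rw [star_star]; exact hr hYr W hWr)

theorem sup_starSubmodule_eq_orthogonal [FiniteDimensional 𝕜 E] (hB : B.Nondegenerate)
    (hB_star : ∀ x y, B (star x) (star y) = star (B x y))
    (hr : r ≤ B.orthogonal r) (hr_dim : 2 * finrank 𝕜 r = finrank 𝕜 E)
    (hVr : V ≤ r) (hV_star : ∀ Y ∈ V, star Y ∈ V) (hinf : r ⊓ starSubmodule r = V) :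
    r ⊔ starSubmodule r = B.orthogonal V := by
  have hle : r ⊔ starSubmodule r ≤ B.orthogonal V := by
    refine sup_le (hr.trans (LinearMap.BilinForm.orthogonal_le hVr)) ?_
    intro Y hY X hX
    obtain ⟨W, hWr, rfl⟩ := mem_starSubmodule.1 hY
    rw [← star_star X, hB_star, hr hWr _ (hVr (hV_star X hX)), star_zero]
  refine Submodule.eq_of_le_of_finrank_eq hle ?_
  have hsum := Submodule.finrank_sup_add_finrank_inf_eq r (starSubmodule r)
  rw [hinf, finrank_starSubmodule] at hsum
  have hV_le : finrank 𝕜 V ≤ finrank 𝕜 E := Submodule.finrank_le V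
  rw [LinearMap.BilinForm.finrank_orthogonal hB]
  omega

end StarSubmodule

namespace CPhase

variable {n : ℕ}

lemma conjV_eq_star (Y : CPhase n) : conjV n Y = star Y := rfl

lemma star_incC (X : (Fin n → ℝ) × (Fin n → ℝ)) : star (incC n X) = incC n X := by
  ext j <;> simp [incC]

lemma star_mem_complexify {L : Submodule ℝ ((Fin n → ℝ) × (Fin n → ℝ))} {Y : CPhase n}
    (hY : Y ∈ complexify n L) : star Y ∈ complexify n L :=
  star_mem_span_of_forall_star_mem
    (by rintro _ ⟨X, hX, rfl⟩; exact ⟨X, hX, (star_incC X).symm⟩) hY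

lemma symplFormC_star (X Y : CPhase n) :
    symplFormC n (star X) (star Y) = star (symplFormC n X Y) := by
  simp [symplFormC]

lemma symplFormC_eq_dotProduct (X Y : CPhase n) :
    symplFormC n X Y = X.1 ⬝ᵥ Y.2 - Y.1 ⬝ᵥ X.2 := by
  simp [symplFormC, dotProduct]

variable (n) in
noncomputable def symplBilin : LinearMap.BilinForm ℂ (CPhase n) :=
  LinearMap.mk₂ ℂ (symplFormC n)
    (fun _ _ _ => by
      simp only [symplFormC_eq_dotProduct, Prod.fst_add, Prod.snd_add, add_dotProduct,
        dotProduct_add]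
      ring)
    (fun _ _ _ => by
      simp only [symplFormC_eq_dotProduct, Prod.smul_fst, Prod.smul_snd, smul_dotProduct,
        dotProduct_smul, smul_eq_mul]
      ring)
    (fun _ _ _ => by
      simp only [symplFormC_eq_dotProduct, Prod.fst_add, Prod.snd_add, add_dotProduct,
        dotProduct_add]
      ring)
    (fun _ _ _ => by
      simp only [symplFormC_eq_dotProduct, Prod.smul_fst, Prod.smul_snd, smul_dotProduct,
        dotProduct_smul, smul_eq_mul]
      ring)

lemma symplBilin_isAlt : (symplBilin n).IsAlt := fun X => by
  simp [symplBilin, symplFormC]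

lemma symplBilin_nondegenerate : (symplBilin n).Nondegenerate := by
  refine symplBilin_isAlt.isRefl.nondegenerate_iff_separatingLeft.2 fun X hX => ?_
  ext j
  · simpa [symplBilin, symplFormC, Pi.single_apply] using hX (0, Pi.single j 1)
  · simpa [symplBilin, symplFormC, Pi.single_apply] using hX (Pi.single j 1, 0)

lemma skewPerpC_eq_orthogonal (V : Submodule ℂ (CPhase n)) :
    skewPerpC n V = (symplBilin n).flip.orthogonal V := rfl

variable (n) in
lemma finrank_CPhase : finrank ℂ (CPhase n) = 2 * n := by
  simp [finrank_prod, two_mul]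

end CPhase

open CPhase in
theorem stmt_9_general (n : ℕ)
    (L : Submodule ℝ ((Fin n → ℝ) × (Fin n → ℝ)))
    (rcheck : Submodule ℂ (CPhase n))
    (hdim : Module.finrank ℂ rcheck = n)
    -- (i) isotropy
    (hiso : IsIsotropicC n rcheck)
    -- (ii) L^ℂ ⊂ ř and ω(Y, Y^*) = 0 on L^ℂ
    (hsub : complexify n L ≤ rcheck)
    -- (iii) positivity outside L^ℂ
    (hpos : ∀ Y ∈ rcheck, Y ∉ complexify n L →
      0 < (-Complex.I * symplFormC n Y (conjV n Y)).re ∧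
      (-Complex.I * symplFormC n Y (conjV n Y)).im = 0) :
    -- (L^ℂ)^{⊥ω} = ř + ř^*
    (∀ Z : CPhase n, Z ∈ skewPerpC n (complexify n L) ↔
      ∃ Y₁ ∈ rcheck, ∃ Y₂ ∈ rcheck, Z = Y₁ + conjV n Y₂) ∧
    -- ř ∩ ř^* = L^ℂ
    (∀ Z : CPhase n, (Z ∈ rcheck ∧ ∃ Y ∈ rcheck, Z = conjV n Y) ↔ Z ∈ complexify n L) := by
  have hr : rcheck ≤ (symplBilin n).flip.orthogonal rcheck := fun Y hY X hX => hiso Y hY X hX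
  have hinf : rcheck ⊓ starSubmodule rcheck = complexify n L := by
    refine le_antisymm (inf_starSubmodule_le hr fun Y hY hYL hY0 => ?_)
      (le_inf hsub fun Z hZ => ?_)
    · have hω : symplFormC n Y (conjV n Y) = 0 := hY0
      simpa [hω] using (hpos Y hY hYL).1
    · exact mem_starSubmodule.2 ⟨star Z, hsub (star_mem_complexify hZ), star_star Z⟩
  have hsup : rcheck ⊔ starSubmodule rcheck = skewPerpC n (complexify n L) := by
    rw [skewPerpC_eq_orthogonal]
    exact sup_starSubmodule_eq_orthogonal symplBilin_nondegenerate.flip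
      (fun X Y => symplFormC_star Y X) hr (by rw [hdim, finrank_CPhase]) hsub
      (fun _ => star_mem_complexify) hinf
  refine ⟨fun Z => ?_, fun Z => ?_⟩
  · rw [← hsup, Submodule.mem_sup]
    constructor
    · rintro ⟨Y₁, h₁, _, hY₂, rfl⟩
      obtain ⟨Y₂, h₂, rfl⟩ := mem_starSubmodule.1 hY₂
      exact ⟨Y₁, h₁, Y₂, h₂, rfl⟩
    · rintro ⟨Y₁, h₁, Y₂, h₂, rfl⟩
      exact ⟨Y₁, h₁, _, star_mem_starSubmodule h₂, rfl⟩
  · simp only [← hinf, Submodule.mem_inf, mem_starSubmodule, conjV_eq_star, eq_comm]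

theorem stmt_9 (n k : ℕ)
    (L : Submodule ℝ ((Fin n → ℝ) × (Fin n → ℝ)))
    (hLdim : Module.finrank ℝ L = k) (hLiso : IsIsotropic n L)
    (rcheck : Submodule ℂ (CPhase n))
    (hdim : Module.finrank ℂ rcheck = n)
    -- (i) isotropy
    (hiso : IsIsotropicC n rcheck)
    -- (ii) L^ℂ ⊂ ř and ω(Y, Y^*) = 0 on L^ℂ
    (hsub : complexify n L ≤ rcheck)
    (hnull : ∀ Y ∈ complexify n L, symplFormC n Y (conjV n Y) = 0)
    -- (iii) positivity outside L^ℂ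
    (hpos : ∀ Y ∈ rcheck, Y ∉ complexify n L →
      0 < (-Complex.I * symplFormC n Y (conjV n Y)).re ∧
      (-Complex.I * symplFormC n Y (conjV n Y)).im = 0) :
    -- (L^ℂ)^{⊥ω} = ř + ř^*
    (∀ Z : CPhase n, Z ∈ skewPerpC n (complexify n L) ↔
      ∃ Y₁ ∈ rcheck, ∃ Y₂ ∈ rcheck, Z = Y₁ + conjV n Y₂) ∧
    -- ř ∩ ř^* = L^ℂ
    (∀ Z : CPhase n, (Z ∈ rcheck ∧ ∃ Y ∈ rcheck, Z = conjV n Y) ↔ Z ∈ complexify n L) :=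
  stmt_9_general n L rcheck hdim hiso hsub hpos
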